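/- For all g >= 1 and n >= 1, the quotient of G_{g,n} by the normal closure of the two elements c_{m,1} and a_1 a_m^{-1} is isomorphic to G_{g,n-1}, via the isomorphism induced by the homomorphism g_2. -/

import Mathlib

/-!
The Gervais presentation of the mapping class group `M_{g,n}` of a compact
oriented surface of genus `g ≥ 1` with `n` boundary components
(S. Gervais, "A finite presentation of the mapping class group of an
oriented surface").

Set `m = 2g + n - 2`.  The group `G g n` below is the group presented with
generators `b`, `b_1, …, b_{g-1}`, `a_1, …, a_m` and `c_{i,j}`
(`1 ≤ i, j ≤ m`, `i ≠ j`) and the relations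

* (A) handles: `c_{2s,2s+1} = c_{2s-1,2s}` for `1 ≤ s ≤ g-1`
  (indices understood cyclically in `{1, …, m}`);
* (T) braids: `xy = yx` whenever the simple closed curves of Gervais's
  configuration labelling the generators `x, y` are disjoint, and
  `xyx = yxy` whenever they intersect transversally in a single point;
* (E_{i,j,k}) stars: `c_{i,j} c_{j,k} c_{k,i} = (a_i a_j a_k b)^3` for each
  good triple `(i,j,k)`, with the convention `c_{l,l} = 1`.

The geometric intersection data of Gervais's configuration is encoded
combinatorially:  the curves `α_1, …, α_m` are pairwise disjoint, `β` meets
each `α_i` in one point, `β_s` meets exactly `α_{2s-1}` and `α_{2s}` among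
the `α`'s, once each, and is disjoint from `β` and from the other `β_t`;
the curve `γ_{i,j}` is disjoint from `β` and from every `α_k`; `β_s` meets
`γ_{i,j}` in one point exactly when `2s ∈ {i,j}`, and two curves `γ_{i,j}`,
`γ_{k,l}` are disjoint exactly when the corresponding cyclic intervals
`[i,j]`, `[k,l]` of `{1, …, m}` do not cross.
-/

namespace Gervais

/-- Generators of the Gervais presentation:  `beta` is `b` (the twist along
`β`), `betaI s` is `b_s` (`1 ≤ s ≤ g-1`), `alpha i` is `a_i`
(`1 ≤ i ≤ 2g+n-2`) and `gamma i j` is `c_{i,j}` (`i ≠ j`). -/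
inductive Gen (g n : ℕ) : Type
  | beta : Gen g n
  | betaI : (s : ℕ) → 1 ≤ s ∧ s ≤ g - 1 → Gen g n
  | alpha : (i : ℕ) → 1 ≤ i ∧ i ≤ 2 * g + n - 2 → Gen g n
  | gamma : (i j : ℕ) →
      (1 ≤ i ∧ i ≤ 2 * g + n - 2) ∧ (1 ≤ j ∧ j ≤ 2 * g + n - 2) ∧ i ≠ j → Gen g n

/-- `x` lies strictly inside the cyclic interval from `a` to `b` in `{1, …, m}`. -/
def StrictlyInside (m a x b : ℕ) : Prop :=
  0 < (x + m - a) % m ∧ (x + m - a) % m < (b + m - a) % m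

/-- The cyclic intervals `[i,j]` and `[k,l]` of `{1, …, m}` cross each other. -/
def Linked (m i j k l : ℕ) : Prop :=
  k ≠ i ∧ k ≠ j ∧ l ≠ i ∧ l ≠ j ∧
    ¬(StrictlyInside m i k j ↔ StrictlyInside m i l j)

/-- The curves labelling the two generators intersect transversally in a
single point. -/
def MeetOnce (g n : ℕ) : Gen g n → Gen g n → Prop
  | .beta, .alpha _ _ => True
  | .alpha _ _, .beta => True
  | .betaI s _, .alpha k _ => k = 2 * s - 1 ∨ k = 2 * s
  | .alpha k _, .betaI s _ => k = 2 * s - 1 ∨ k = 2 * s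
  | .betaI s _, .gamma i j _ => i = 2 * s ∨ j = 2 * s
  | .gamma i j _, .betaI s _ => i = 2 * s ∨ j = 2 * s
  | _, _ => False

/-- The curves labelling the two generators are disjoint. -/
def DisjointCurves (g n : ℕ) : Gen g n → Gen g n → Prop
  | .beta, .beta => False
  | .beta, .alpha _ _ => False
  | .alpha _ _, .beta => False
  | .beta, .betaI _ _ => True
  | .betaI _ _, .beta => True
  | .beta, .gamma _ _ _ => True
  | .gamma _ _ _, .beta => True
  | .alpha i _, .alpha j _ => i ≠ j
  | .alpha _ _, .gamma _ _ _ => True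
  | .gamma _ _ _, .alpha _ _ => True
  | .alpha k _, .betaI s _ => ¬(k = 2 * s - 1 ∨ k = 2 * s)
  | .betaI s _, .alpha k _ => ¬(k = 2 * s - 1 ∨ k = 2 * s)
  | .betaI s _, .betaI t _ => s ≠ t
  | .betaI s _, .gamma i j _ => ¬(i = 2 * s ∨ j = 2 * s)
  | .gamma i j _, .betaI s _ => ¬(i = 2 * s ∨ j = 2 * s)
  | .gamma i j _, .gamma k l _ =>
      ¬Linked (2 * g + n - 2) i j k l ∧ ¬Linked (2 * g + n - 2) k l i j

/-- The letter `a_i` in the free group (out-of-range indices give `1`). -/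
def aF (g n : ℕ) (i : ℕ) : FreeGroup (Gen g n) :=
  if h : 1 ≤ i ∧ i ≤ 2 * g + n - 2 then FreeGroup.of (Gen.alpha i h) else 1

/-- The letter `c_{i,j}` in the free group, with the convention `c_{l,l} = 1`
(out-of-range indices give `1`). -/
def cF (g n : ℕ) (i j : ℕ) : FreeGroup (Gen g n) :=
  if h : (1 ≤ i ∧ i ≤ 2 * g + n - 2) ∧ (1 ≤ j ∧ j ≤ 2 * g + n - 2) ∧ i ≠ j then
    FreeGroup.of (Gen.gamma i j h) else 1

/-- Reduction of an index into `{1, …, m}`, cyclically. -/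
def cyc (m k : ℕ) : ℕ := (k - 1) % m + 1

/-- `(i,j,k)` is a good triple of `{1, …, m}^3`: the three entries are not
all equal and `i ≤ j ≤ k` or `j ≤ k ≤ i` or `k ≤ i ≤ j`. -/
def Good (m i j k : ℕ) : Prop :=
  (1 ≤ i ∧ i ≤ m) ∧ (1 ≤ j ∧ j ≤ m) ∧ (1 ≤ k ∧ k ≤ m) ∧
    ¬(i = j ∧ j = k) ∧ ((i ≤ j ∧ j ≤ k) ∨ (j ≤ k ∧ k ≤ i) ∨ (k ≤ i ∧ i ≤ j))

/-- The relators of the Gervais presentation: handles `(A)`, braids `(T)` and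
stars `(E_{i,j,k})`. -/
inductive IsRel (g n : ℕ) : FreeGroup (Gen g n) → Prop
  | handle (s : ℕ) (h : 1 ≤ s ∧ s ≤ g - 1) :
      IsRel g n (cF g n (2 * s) (cyc (2 * g + n - 2) (2 * s + 1)) *
        (cF g n (2 * s - 1) (2 * s))⁻¹)
  | comm (x y : Gen g n) (h : DisjointCurves g n x y) :
      IsRel g n (FreeGroup.of x * FreeGroup.of y *
        (FreeGroup.of y * FreeGroup.of x)⁻¹)
  | braid (x y : Gen g n) (h : MeetOnce g n x y) :
      IsRel g n (FreeGroup.of x * FreeGroup.of y * FreeGroup.of x *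
        (FreeGroup.of y * FreeGroup.of x * FreeGroup.of y)⁻¹)
  | star (i j k : ℕ) (h : Good (2 * g + n - 2) i j k) :
      IsRel g n (cF g n i j * cF g n j k * cF g n k i *
        ((aF g n i * aF g n j * aF g n k * FreeGroup.of Gen.beta) ^ 3)⁻¹)

/-- The group `G_{g,n}` of the Gervais presentation. -/
abbrev G (g n : ℕ) : Type := PresentedGroup {r : FreeGroup (Gen g n) | IsRel g n r}

/-- The generator `b` of `G_{g,n}`. -/
def b (g n : ℕ) : G g n := PresentedGroup.of Gen.beta

/-- The generator `b_s` of `G_{g,n}` (out-of-range: `1`). -/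
def bI (g n : ℕ) (s : ℕ) : G g n :=
  if h : 1 ≤ s ∧ s ≤ g - 1 then PresentedGroup.of (Gen.betaI s h) else 1

/-- The generator `a_i` of `G_{g,n}` (out-of-range: `1`). -/
def a (g n : ℕ) (i : ℕ) : G g n :=
  if h : 1 ≤ i ∧ i ≤ 2 * g + n - 2 then PresentedGroup.of (Gen.alpha i h) else 1

/-- The generator `c_{i,j}` of `G_{g,n}` (`c_{l,l} = 1`; out-of-range: `1`). -/
def c (g n : ℕ) (i j : ℕ) : G g n :=
  if h : (1 ≤ i ∧ i ≤ 2 * g + n - 2) ∧ (1 ≤ j ∧ j ≤ 2 * g + n - 2) ∧ i ≠ j then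
    PresentedGroup.of (Gen.gamma i j h) else 1


/-- `φ : G_{g,n} → G_{g,n-1}` takes the values prescribed for the
homomorphism `g_2`  (writing `a'_i, b', b'_s, c'_{i,j}` for the generators of
`G_{g,n-1}` and `m = 2g+n-2`):  `g_2 a_i = a'_i` for `i ≠ m`, `g_2 a_m = a'_1`,
`g_2 b = b'`, `g_2 b_s = b'_s` for `1 ≤ s ≤ g-1`, `g_2 c_{i,j} = c'_{i,j}` for
`1 ≤ i, j ≤ m-1`, `g_2 c_{i,m} = c'_{i,1}` and `g_2 c_{m,j} = c'_{1,j}` for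
`2 ≤ i, j ≤ m-1`, `g_2 c_{1,m} = (a'_1 b' a'_1)^4` and `g_2 c_{m,1} = 1`. -/
def G2Spec (g n : ℕ) (φ : G g n →* G g (n - 1)) : Prop :=
  (∀ i, 1 ≤ i → i ≤ 2 * g + n - 3 → φ (a g n i) = a g (n - 1) i) ∧
  φ (a g n (2 * g + n - 2)) = a g (n - 1) 1 ∧
  φ (b g n) = b g (n - 1) ∧
  (∀ s, 1 ≤ s → s ≤ g - 1 → φ (bI g n s) = bI g (n - 1) s) ∧
  (∀ i j, 1 ≤ i → i ≤ 2 * g + n - 3 → 1 ≤ j → j ≤ 2 * g + n - 3 →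
    φ (c g n i j) = c g (n - 1) i j) ∧
  (∀ i, 2 ≤ i → i ≤ 2 * g + n - 3 → φ (c g n i (2 * g + n - 2)) = c g (n - 1) i 1) ∧
  (∀ j, 2 ≤ j → j ≤ 2 * g + n - 3 → φ (c g n (2 * g + n - 2) j) = c g (n - 1) 1 j) ∧
  φ (c g n 1 (2 * g + n - 2)) = (a g (n - 1) 1 * b g (n - 1) * a g (n - 1) 1) ^ 4 ∧
  φ (c g n (2 * g + n - 2) 1) = 1

/-!
Killing `c_{m,1}` and identifying `a_m` with `a_1` turns the star relations `E_{i,m,1}`,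
`E_{i,m,m}`, `E_{i,1,1}` and `E_{1,1,m}` into `c_{m,i} = c_{1,i}`, `c_{i,m} = c_{i,1}` and
`c_{1,m} = (a_1³ b)³ = (a_1 b a_1)⁴`, so the quotient is generated by the images of the generators
of `G_{g,n-1}` (all indices `≤ m - 1`).  These images satisfy the relations of `G_{g,n-1}`: two
cyclic intervals of `{1, …, m-1}` cross exactly when they cross in `{1, …, m}`, and the one handle
relation that wraps around, `c_{m-1,1} = c_{m-2,m-1}`, follows from `c_{m-1,1} = c_{m-1,m}`.  This
gives a homomorphism from `G_{g,n-1}` to the quotient, inverse to the one induced by `g_2`.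
-/

theorem pow_three_mul_pow_three_of_braid {M : Type*} [Group M] {x y : M}
    (h : x * y * x = y * x * y) : (x ^ 3 * y) ^ 3 = (x * y * x) ^ 4 := by
  obtain ⟨Δ, hΔ⟩ : ∃ Δ, x * y * x = Δ := ⟨_, rfl⟩
  have fold_x (r : M) : x * (y * (x * r)) = Δ * r := by rw [← hΔ]; group
  have fold_y (r : M) : y * (x * (y * r)) = Δ * r := by rw [← hΔ, h]; group
  have swap_x (r : M) : Δ * (x * r) = y * (Δ * r) := by rw [← fold_y, fold_x]
  have swap_y (r : M) : Δ * (y * r) = x * (Δ * r) := by rw [← fold_x, fold_y]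
  -- Pushing every `Δ` to the right (it conjugates `x` to `y`) normalises both sides.
  rw [hΔ, ← mul_one ((x ^ 3 * y) ^ 3), ← mul_one (Δ ^ 4)]
  simp only [pow_succ, pow_zero, one_mul, mul_assoc, fold_x, fold_y, swap_x, swap_y]

theorem cyc_of_le {m k : ℕ} (hk : 1 ≤ k) (hkm : k ≤ m) : cyc m k = k := by
  rw [cyc, Nat.mod_eq_of_lt (by omega)]
  omega

theorem cyc_succ_self (m : ℕ) : cyc m (m + 1) = 1 := by
  simp [cyc]

theorem Good.mono {m m' i j k : ℕ} (h : Good m i j k) (hm : m ≤ m') : Good m' i j k := by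
  unfold Good at *
  omega

theorem add_sub_mod_eq_ite {m p x : ℕ} (hp : 1 ≤ p) (hpm : p ≤ m) (hx : x ≤ m) :
    (x + m - p) % m = if p ≤ x then x - p else x + m - p := by
  split_ifs with hpx
  · rw [show x + m - p = x - p + m by omega, Nat.add_mod_right, Nat.mod_eq_of_lt (by omega)]
  · exact Nat.mod_eq_of_lt (by omega)

theorem strictlyInside_succ_iff {m p x q : ℕ} (hp : p ∈ Set.Icc 1 m) (hx : x ∈ Set.Icc 1 m)
    (hq : q ∈ Set.Icc 1 m) : StrictlyInside (m + 1) p x q ↔ StrictlyInside m p x q := by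
  obtain ⟨hp₁, hp₂⟩ := hp
  obtain ⟨hx₁, hx₂⟩ := hx
  obtain ⟨hq₁, hq₂⟩ := hq
  unfold StrictlyInside
  rw [add_sub_mod_eq_ite hp₁ (by omega) (by omega),
    add_sub_mod_eq_ite hp₁ (by omega) (by omega),
    add_sub_mod_eq_ite hp₁ hp₂ hx₂, add_sub_mod_eq_ite hp₁ hp₂ hq₂]
  split_ifs <;> omega

theorem linked_succ_iff {m i j k l : ℕ} (hi : i ∈ Set.Icc 1 m) (hj : j ∈ Set.Icc 1 m)
    (hk : k ∈ Set.Icc 1 m) (hl : l ∈ Set.Icc 1 m) :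
    Linked (m + 1) i j k l ↔ Linked m i j k l := by
  rw [Linked, Linked, strictlyInside_succ_iff hi hk hj, strictlyInside_succ_iff hi hl hj]

section Generators

variable {g n : ℕ}

theorem a_eq_of {i : ℕ} (h : 1 ≤ i ∧ i ≤ 2 * g + n - 2) :
    a g n i = PresentedGroup.of (Gen.alpha i h) := dif_pos h

theorem bI_eq_of {s : ℕ} (h : 1 ≤ s ∧ s ≤ g - 1) :
    bI g n s = PresentedGroup.of (Gen.betaI s h) := dif_pos h

theorem c_eq_of {i j : ℕ}
    (h : (1 ≤ i ∧ i ≤ 2 * g + n - 2) ∧ (1 ≤ j ∧ j ≤ 2 * g + n - 2) ∧ i ≠ j) :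
    c g n i j = PresentedGroup.of (Gen.gamma i j h) := dif_pos h

theorem c_self (i : ℕ) : c g n i i = 1 := dif_neg fun h => h.2.2 rfl

theorem mk_aF (i : ℕ) : PresentedGroup.mk _ (aF g n i) = a g n i := by
  unfold aF a
  split_ifs <;> rfl

theorem mk_cF (i j : ℕ) : PresentedGroup.mk _ (cF g n i j) = c g n i j := by
  unfold cF c
  split_ifs <;> rfl

theorem mk_of_beta : PresentedGroup.mk _ (FreeGroup.of Gen.beta) = b g n := rfl

theorem of_braid {x y : Gen g n} (h : MeetOnce g n x y) :
    (PresentedGroup.of x : G g n) * .of y * .of x = .of y * .of x * .of y :=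
  PresentedGroup.mk_eq_mk_of_mul_inv_mem (IsRel.braid x y h)

theorem star_eq {i j k : ℕ} (h : Good (2 * g + n - 2) i j k) :
    c g n i j * c g n j k * c g n k i = (a g n i * a g n j * a g n k * b g n) ^ 3 := by
  simpa only [map_mul, map_pow, mk_cF, mk_aF, mk_of_beta] using
    PresentedGroup.mk_eq_mk_of_mul_inv_mem (rels := {r | IsRel g n r}) (IsRel.star i j k h)

theorem handle_eq {s : ℕ} (h : 1 ≤ s ∧ s ≤ g - 1) :
    c g n (2 * s) (cyc (2 * g + n - 2) (2 * s + 1)) = c g n (2 * s - 1) (2 * s) := by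
  simpa only [mk_cF] using
    PresentedGroup.mk_eq_mk_of_mul_inv_mem (rels := {r | IsRel g n r}) (IsRel.handle s h)

end Generators

section Widen

variable {g n : ℕ}

def Gen.widen : Gen g (n - 1) → Gen g n
  | .beta => .beta
  | .betaI s h => .betaI s h
  | .alpha i h => .alpha i ⟨h.1, by omega⟩
  | .gamma i j h => .gamma i j ⟨⟨h.1.1, by omega⟩, ⟨h.2.1.1, by omega⟩, h.2.2⟩

theorem meetOnce_widen {x y : Gen g (n - 1)} (h : MeetOnce g (n - 1) x y) :
    MeetOnce g n x.widen y.widen := by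
  cases x <;> cases y <;> exact h

theorem disjointCurves_widen (hn : 1 ≤ n) {x y : Gen g (n - 1)}
    (h : DisjointCurves g (n - 1) x y) : DisjointCurves g n x.widen y.widen := by
  cases x <;> cases y <;> try exact h
  case gamma.gamma i j hij k l hkl =>
    have hm : 2 * g + n - 2 = 2 * g + (n - 1) - 2 + 1 := by omega
    change ¬Linked (2 * g + n - 2) i j k l ∧ ¬Linked (2 * g + n - 2) k l i j
    rw [hm, linked_succ_iff hij.1 hij.2.1 hkl.1 hkl.2.1,
      linked_succ_iff hkl.1 hkl.2.1 hij.1 hij.2.1]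
    exact h

theorem map_widen_aF {i : ℕ} (hi : i ≤ 2 * g + (n - 1) - 2) :
    FreeGroup.map Gen.widen (aF g (n - 1) i) = aF g n i := by
  unfold aF
  split_ifs <;> first | rfl | omega

theorem map_widen_cF {i j : ℕ} (hi : i ≤ 2 * g + (n - 1) - 2) (hj : j ≤ 2 * g + (n - 1) - 2) :
    FreeGroup.map Gen.widen (cF g (n - 1) i j) = cF g n i j := by
  unfold cF
  split_ifs <;> first | rfl | omega

end Widen

section Quotient

variable {g n : ℕ}

variable (g n) in
abbrev kerG2 : Subgroup (G g n) :=
  Subgroup.normalClosure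
    ({c g n (2 * g + n - 2) 1, a g n 1 * (a g n (2 * g + n - 2))⁻¹} : Set (G g n))

variable (g n) in
abbrev Q : Type := G g n ⧸ kerG2 g n

theorem mk_a_one : (a g n 1 : Q g n) = a g n (2 * g + n - 2) :=
  QuotientGroup.eq_iff_div_mem.mpr <| by
    rw [div_eq_mul_inv]
    exact Subgroup.subset_normalClosure (Set.mem_insert_of_mem _ rfl)

theorem mk_c_last_one : (c g n (2 * g + n - 2) 1 : Q g n) = 1 :=
  (QuotientGroup.eq_one_iff _).mpr (Subgroup.subset_normalClosure (Set.mem_insert _ _))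

theorem mk_star {i j k : ℕ} (h : Good (2 * g + n - 2) i j k) :
    (c g n i j : Q g n) * c g n j k * c g n k i =
      ((a g n i : Q g n) * a g n j * a g n k * b g n) ^ 3 := by
  exact_mod_cast congrArg ((↑) : G g n → Q g n) (star_eq h)

theorem mk_c_last_left {i : ℕ} (hi : 1 ≤ i) (him : i < 2 * g + n - 2) :
    (c g n (2 * g + n - 2) i : Q g n) = c g n 1 i := by
  have E₁ := mk_star (g := g) (n := n) (i := i) (j := 2 * g + n - 2) (k := 2 * g + n - 2)
    (by unfold Good; omega)
  have E₂ := mk_star (g := g) (n := n) (i := i) (j := 2 * g + n - 2) (k := 1)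
    (by unfold Good; omega)
  rw [c_self, QuotientGroup.mk_one, mul_one, ← mk_a_one] at E₁
  rw [mk_c_last_one, mul_one, ← mk_a_one] at E₂
  exact mul_left_cancel (E₁.trans E₂.symm)

theorem mk_c_one_right {i : ℕ} (hi : 2 ≤ i) (him : i < 2 * g + n - 2) :
    (c g n i 1 : Q g n) = c g n i (2 * g + n - 2) := by
  have E₁ := mk_star (g := g) (n := n) (i := i) (j := 1) (k := 1) (by unfold Good; omega)
  have E₂ := mk_star (g := g) (n := n) (i := i) (j := 2 * g + n - 2) (k := 1)
    (by unfold Good; omega)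
  rw [c_self, QuotientGroup.mk_one, mul_one] at E₁
  rw [mk_c_last_one, mul_one, ← mk_a_one] at E₂
  exact mul_right_cancel (E₁.trans E₂.symm)

theorem mk_c_one_last (hm : 2 ≤ 2 * g + n - 2) :
    (c g n 1 (2 * g + n - 2) : Q g n) = ((a g n 1 * b g n * a g n 1) ^ 4 : G g n) := by
  have E := mk_star (g := g) (n := n) (i := 1) (j := 1) (k := 2 * g + n - 2)
    (by unfold Good; omega)
  rw [c_self, QuotientGroup.mk_one, one_mul, mk_c_last_one, mul_one, ← mk_a_one] at E
  have braid : a g n 1 * b g n * a g n 1 = b g n * a g n 1 * b g n := by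
    rw [a_eq_of ⟨le_rfl, by omega⟩]
    exact of_braid trivial
  rw [E, ← pow_three_mul_pow_three_of_braid braid]
  push_cast [pow_three, mul_assoc]
  rfl

end Quotient

section Inverse

variable {g n : ℕ}

theorem lift_widen_eq :
    FreeGroup.lift (fun x : Gen g (n - 1) => ((PresentedGroup.of x.widen : G g n) : Q g n)) =
      (QuotientGroup.mk' (kerG2 g n)).comp ((PresentedGroup.mk _).comp (FreeGroup.map Gen.widen)) :=
  FreeGroup.ext_hom _ _ fun _ => rfl

theorem mk_map_widen_handle (hn : 1 ≤ n) {s : ℕ} (hs : 1 ≤ s ∧ s ≤ g - 1) :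
    ((PresentedGroup.mk _ (FreeGroup.map Gen.widen
        (cF g (n - 1) (2 * s) (cyc (2 * g + (n - 1) - 2) (2 * s + 1)) *
          (cF g (n - 1) (2 * s - 1) (2 * s))⁻¹)) : G g n) : Q g n) = 1 := by
  have handle := handle_eq (n := n) hs
  by_cases hwrap : 2 * s + 1 ≤ 2 * g + (n - 1) - 2
  · rw [cyc_of_le (by omega) hwrap, cyc_of_le (by omega) (by omega)] at *
    simp (disch := omega) only [map_mul, map_inv, map_widen_cF, mk_cF, handle, mul_inv_cancel,
      QuotientGroup.mk_one]
  · -- The relation wraps around: `2s + 1 ≡ 1` modulo `m - 1`, but not modulo `m`.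
    obtain ⟨hwrap', hwrapm⟩ : 2 * s = 2 * g + (n - 1) - 2 ∧ 2 * s + 1 = 2 * g + n - 2 := by
      omega
    rw [hwrapm, cyc_of_le (by omega) le_rfl] at handle
    rw [hwrap', cyc_succ_self, ← hwrap']
    simp (disch := omega) only [map_mul, map_inv, map_widen_cF, mk_cF, QuotientGroup.mk_mul,
      QuotientGroup.mk_inv, mul_inv_eq_one]
    rw [mk_c_one_right (by omega) (by omega), handle]

theorem mk_map_widen_eq_one (hn : 1 ≤ n) {r : FreeGroup (Gen g (n - 1))}
    (hr : IsRel g (n - 1) r) :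
    ((PresentedGroup.mk _ (FreeGroup.map Gen.widen r) : G g n) : Q g n) = 1 := by
  have mk_eq_one {w : FreeGroup (Gen g n)} (hw : IsRel g n w) :
      ((PresentedGroup.mk _ w : G g n) : Q g n) = 1 := by
    rw [PresentedGroup.one_of_mem (rels := {r | IsRel g n r}) hw, QuotientGroup.mk_one]
  cases hr with
  | handle s hs => exact mk_map_widen_handle hn hs
  | comm x y h =>
    apply mk_eq_one
    simpa only [map_mul, map_inv, FreeGroup.map.of] using
      IsRel.comm _ _ (disjointCurves_widen hn h)
  | braid x y h =>
    apply mk_eq_one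
    simpa only [map_mul, map_inv, FreeGroup.map.of] using IsRel.braid _ _ (meetOnce_widen h)
  | star i j k h =>
    apply mk_eq_one
    have h' : Good (2 * g + n - 2) i j k := h.mono (by omega)
    obtain ⟨⟨-, hi⟩, ⟨-, hj⟩, ⟨-, hk⟩, -⟩ := h
    simpa only [map_mul, map_inv, map_pow, FreeGroup.map.of, Gen.widen, map_widen_cF, map_widen_aF,
      hi, hj, hk] using IsRel.star (g := g) (n := n) i j k h'

variable (hn : 1 ≤ n)

def g2Inv : G g (n - 1) →* Q g n :=
  PresentedGroup.toGroup (f := fun x => ((PresentedGroup.of x.widen : G g n) : Q g n))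
    fun _ hr => by rw [lift_widen_eq]; exact mk_map_widen_eq_one hn hr

theorem g2Inv_mk (w : FreeGroup (Gen g (n - 1))) :
    g2Inv hn (PresentedGroup.mk _ w) =
      ((PresentedGroup.mk _ (FreeGroup.map Gen.widen w) : G g n) : Q g n) := by
  change FreeGroup.lift _ w = _
  rw [lift_widen_eq]
  rfl

theorem g2Inv_of (x : Gen g (n - 1)) :
    g2Inv hn (PresentedGroup.of x) = ((PresentedGroup.of x.widen : G g n) : Q g n) :=
  PresentedGroup.toGroup.of _

theorem g2Inv_a {i : ℕ} (hi : i ≤ 2 * g + (n - 1) - 2) :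
    g2Inv hn (a g (n - 1) i) = a g n i := by
  rw [← mk_aF (n := n - 1), g2Inv_mk, map_widen_aF hi, mk_aF]

theorem g2Inv_c {i j : ℕ} (hi : i ≤ 2 * g + (n - 1) - 2) (hj : j ≤ 2 * g + (n - 1) - 2) :
    g2Inv hn (c g (n - 1) i j) = c g n i j := by
  rw [← mk_cF (n := n - 1), g2Inv_mk, map_widen_cF hi hj, mk_cF]

theorem g2Inv_b : g2Inv hn (b g (n - 1)) = b g n :=
  g2Inv_of hn _

theorem g2Inv_bI (s : ℕ) : g2Inv hn (bI g (n - 1) s) = bI g n s := by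
  unfold bI
  split_ifs
  · exact g2Inv_of hn _
  · exact map_one _

end Inverse

section G2Spec

variable {g n : ℕ} {φ : G g n →* G g (n - 1)}

theorem G2Spec.kerG2_le_ker (hφ : G2Spec g n φ) (hm : 2 ≤ 2 * g + n - 2) :
    kerG2 g n ≤ φ.ker := by
  obtain ⟨ha, ham, -, -, -, -, -, -, hcm1⟩ := hφ
  refine Subgroup.normalClosure_le_normal ?_
  rintro x (rfl | rfl)
  · exact hcm1
  · rw [SetLike.mem_coe, MonoidHom.mem_ker, map_mul, map_inv, ha 1 le_rfl (by omega), ham,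
      mul_inv_cancel]

theorem G2Spec.map_of_widen (hφ : G2Spec g n φ) (hn : 1 ≤ n) (x : Gen g (n - 1)) :
    φ (PresentedGroup.of x.widen) = PresentedGroup.of x := by
  obtain ⟨ha, -, hb, hbI, hc, -⟩ := hφ
  cases x with
  | beta => exact hb
  | betaI s h => rw [Gen.widen, ← bI_eq_of, hbI s h.1 h.2, bI_eq_of]
  | alpha i h => rw [Gen.widen, ← a_eq_of, ha i h.1 (by omega), a_eq_of]
  | gamma i j h => rw [Gen.widen, ← c_eq_of, hc i j h.1.1 (by omega) h.2.1.1 (by omega), c_eq_of]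

theorem G2Spec.g2Inv_map_a (hφ : G2Spec g n φ) (hn : 1 ≤ n) (hm : 2 ≤ 2 * g + n - 2) {i : ℕ}
    (hi : 1 ≤ i) (him : i ≤ 2 * g + n - 2) : g2Inv hn (φ (a g n i)) = a g n i := by
  obtain ⟨ha, ham, -⟩ := hφ
  rcases Nat.lt_or_eq_of_le him with him | rfl
  · rw [ha i hi (by omega), g2Inv_a hn (by omega)]
  · rw [ham, g2Inv_a hn (by omega), mk_a_one]

theorem G2Spec.g2Inv_map_c (hφ : G2Spec g n φ) (hn : 1 ≤ n) (hm : 2 ≤ 2 * g + n - 2)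
    {i j : ℕ} (hi : 1 ≤ i) (him : i ≤ 2 * g + n - 2) (hj : 1 ≤ j)
    (hjm : j ≤ 2 * g + n - 2) :
    g2Inv hn (φ (c g n i j)) = c g n i j := by
  obtain ⟨-, -, -, -, hc, hcim, hcmj, hc1m, hcm1⟩ := hφ
  rcases Nat.lt_or_eq_of_le him with him | rfl <;> rcases Nat.lt_or_eq_of_le hjm with hjm | rfl
  · rw [hc i j hi (by omega) hj (by omega), g2Inv_c hn (by omega) (by omega)]
  · rcases Nat.lt_or_eq_of_le hi with hi | rfl
    · rw [hcim i hi (by omega), g2Inv_c hn (by omega) (by omega), mk_c_one_right hi him]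
    · rw [hc1m, map_pow, map_mul, map_mul, g2Inv_a hn (by omega), g2Inv_b, mk_c_one_last hm]
      rfl
  · rcases Nat.lt_or_eq_of_le hj with hj | rfl
    · rw [hcmj j hj (by omega), g2Inv_c hn (by omega) (by omega), mk_c_last_left hj.le hjm]
    · rw [hcm1, map_one, mk_c_last_one]
  · rw [c_self, map_one, map_one, QuotientGroup.mk_one]

theorem G2Spec.g2Inv_map (hφ : G2Spec g n φ) (hn : 1 ≤ n) (hm : 2 ≤ 2 * g + n - 2)
    (y : G g n) :
    g2Inv hn (φ y) = y := by
  suffices (g2Inv hn).comp φ = QuotientGroup.mk' (kerG2 g n) from DFunLike.congr_fun this y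
  have ⟨_, _, hb, hbI, _⟩ := hφ
  ext x
  rw [MonoidHom.comp_apply, QuotientGroup.mk'_apply]
  cases x with
  | beta => rw [← b, hb, g2Inv_b]
  | betaI s h => rw [← bI_eq_of h, hbI s h.1 h.2, g2Inv_bI]
  | alpha i h => rw [← a_eq_of h, hφ.g2Inv_map_a hn hm h.1 h.2]
  | gamma i j h => rw [← c_eq_of h, hφ.g2Inv_map_c hn hm h.1.1 h.1.2 h.2.1.1 h.2.1.2]

theorem b_one_zero_ne_one : b 1 0 ≠ 1 := by
  let count : G 1 0 →* Multiplicative ℤ :=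
    PresentedGroup.toGroup (f := fun _ => Multiplicative.ofAdd 1) fun r hr => by
      cases hr with
      | handle s h => omega
      | comm x y _ => simp
      | braid x y _ => simp
      | star i j k h => exact absurd h (by unfold Good; omega)
  intro h
  have := congrArg count h
  simp [count, b] at this

theorem not_g2Spec_one_one (φ : G 1 1 →* G 1 0) : ¬G2Spec 1 1 φ := by
  rintro ⟨-, ham, hb, -⟩
  -- Here `m = 1`, so `a_1 = a_m ↦ a'_1`, which is out of range (`1`) in `G_{1,0}`.
  have ha : φ (a 1 1 1) = 1 := ham.trans (dif_neg (by omega))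
  have braid := congrArg φ (of_braid (g := 1) (n := 1) (x := .alpha 1 ⟨le_rfl, le_rfl⟩)
    (y := .beta) trivial)
  rw [← a_eq_of, ← b, map_mul, map_mul, map_mul, map_mul, ha, hb, one_mul, mul_one,
    left_eq_mul] at braid
  exact b_one_zero_ne_one braid

theorem G2Spec.two_le (hφ : G2Spec g n φ) (hg : 1 ≤ g) (hn : 1 ≤ n) :
    2 ≤ 2 * g + n - 2 := by
  by_contra h
  obtain rfl : g = 1 := by omega
  obtain rfl : n = 1 := by omega
  exact not_g2Spec_one_one φ hφ

end G2Spec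

/-- For all `g ≥ 1` and `n ≥ 1`, the quotient of `G_{g,n}` by the normal
closure of the two elements `c_{m,1}` and `a_1 a_m⁻¹` is isomorphic to
`G_{g,n-1}`, via the isomorphism induced by the homomorphism `g_2`. -/
theorem quotient_iso (g n : ℕ) (hg : 1 ≤ g) (hn : 1 ≤ n)
    (φ : G g n →* G g (n - 1)) (hφ : G2Spec g n φ) :
    ∃ e : G g n ⧸ Subgroup.normalClosure
        ({c g n (2 * g + n - 2) 1, a g n 1 * (a g n (2 * g + n - 2))⁻¹} :
          Set (G g n)) ≃* G g (n - 1),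
      ∀ y : G g n, e (QuotientGroup.mk y) = φ y := by
  have hm := hφ.two_le hg hn
  refine ⟨MonoidHom.toMulEquiv (QuotientGroup.lift _ φ (hφ.kerG2_le_ker hm)) (g2Inv hn) ?_ ?_,
    fun _ => rfl⟩
  · ext x
    exact hφ.g2Inv_map hn hm _
  · ext x
    exact hφ.map_of_widen hn x

end Gervais
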